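/- arXiv:1311.4734 — 2 statements merged into one kernel-verified Lean document; each statement's English description precedes it below -/
import Mathlib

section
/- Let {a_i} be a strictly increasing sequence of positive integers such that a_n and n have the same parity for every n ≥ 1. Then the infinite concatenation x = M_{a_1} M_{a_2} M_{a_3} ... is contained in the Morse minimal set M = cl{ m, σ(m), σ²(m), ... }, where m is the Morse sequence. -/
open Filter

/-- Metric on Σ₂ = {0,1}^ℕ : d(u,v) = Σ_{i≥1} δ(u_i,v_i)/2^i (coordinates 0-indexed). -/
noncomputable def dist2 (u v : ℕ → Bool) : ℝ :=
  ∑' i : ℕ, if u i = v i then 0 else (1/2)^(i+1)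

/-- The shift map. -/
def shift (u : ℕ → Bool) : ℕ → Bool := fun n => u (n + 1)

/-- Binary complement of a word. -/
def wordCompl (B : List Bool) : List Bool := B.map (fun b => !b)

/-- Morse blocks: M_0 = 0, M_{i+1} = M_i followed by its complement. -/
def morseBlock : ℕ → List Bool
  | 0 => [false]
  | i + 1 => morseBlock i ++ wordCompl (morseBlock i)

/-- The Morse sequence, the limit of the Morse blocks. -/
def morse : ℕ → Bool := fun n => (morseBlock (n + 1)).getD n false

open Classical in
/-- Infinite concatenation of a sequence of (nonempty) blocks. -/
noncomputable def concatSeq (B : ℕ → List Bool) (k : ℕ) : Bool :=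
  if h : ∃ n, ∑ i ∈ Finset.range n, (B i).length ≤ k ∧
      k < ∑ i ∈ Finset.range (n + 1), (B i).length then
    (B h.choose).getD (k - ∑ i ∈ Finset.range h.choose, (B i).length) false
  else false

open Classical in
/-- Lower distributional function. -/
noncomputable def Phi (x y : ℕ → Bool) (δ : ℝ) : ℝ :=
  liminf (fun m : ℕ =>
    (((Finset.Ioo 0 m).filter (fun k => dist2 (shift^[k] x) (shift^[k] y) < δ)).card : ℝ) / m)
    atTop

open Classical in
/-- Upper distributional function. -/
noncomputable def PhiStar (x y : ℕ → Bool) (ε : ℝ) : ℝ :=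
  limsup (fun m : ℕ =>
    (((Finset.Ioo 0 m).filter (fun k => dist2 (shift^[k] x) (shift^[k] y) < ε)).card : ℝ) / m)
    atTop

/-- A Li-Yorke scrambled triple. -/
noncomputable def ScrTriple (x y z : ℕ → Bool) : Prop :=
  x ≠ y ∧ x ≠ z ∧ y ≠ z ∧
  liminf (fun k : ℕ => max (max (dist2 (shift^[k] x) (shift^[k] y))
      (dist2 (shift^[k] x) (shift^[k] z))) (dist2 (shift^[k] y) (shift^[k] z))) atTop = 0 ∧
  0 < limsup (fun k : ℕ => min (min (dist2 (shift^[k] x) (shift^[k] y))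
      (dist2 (shift^[k] x) (shift^[k] z))) (dist2 (shift^[k] y) (shift^[k] z))) atTop

/-- Concatenation of Morse blocks M_{a j}, complemented where `e j = true`. -/
noncomputable def blockPt (a : ℕ → ℕ) (e : ℕ → Bool) : ℕ → Bool :=
  concatSeq (fun j => if e j then wordCompl (morseBlock (a j)) else morseBlock (a j))

/-- A point occurring as in Theorem 2: odd-position blocks fixed, even-position blocks chosen by α. -/
noncomputable def xpt (a : ℕ → ℕ) (α : ℕ → Bool) : ℕ → Bool :=
  blockPt a (fun j => if j % 2 = 0 then α (j / 2) else false)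

/-- Cantor set predicate. -/
def IsCantorSet (C : Set (ℕ → Bool)) : Prop :=
  C.Nonempty ∧ IsCompact C ∧ Perfect C ∧ IsTotallyDisconnected C

/-- The Morse minimal set: orbit closure of the Morse sequence. -/
def morseMinimal : Set (ℕ → Bool) := closure {y | ∃ k : ℕ, y = shift^[k] morse}


/-! The finite words `P_n = M_{a_0} ⋯ M_{a_n}` are prefixes of `x`. Since `M_{k+2}` ends with
`M̄_k`, the complemented block `M̄_k` is a suffix of `M̄_l` whenever `k ≤ l` have the same parity;
the parity hypothesis then gives inductively that `P_n` is a suffix of `M̄_{a_n+1}`, hence of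
`M_{a_n+2} = M_{a_n+1} M̄_{a_n+1}`, which is a prefix of `m`. So arbitrarily long prefixes of `x`
occur in `m`, i.e. `x` is a limit of shifts of `m`. -/

lemma wordCompl_append (A B : List Bool) :
    wordCompl (A ++ B) = wordCompl A ++ wordCompl B :=
  List.map_append

lemma wordCompl_wordCompl (A : List Bool) : wordCompl (wordCompl A) = A := by
  simp [wordCompl, Function.comp_def]

lemma length_wordCompl (A : List Bool) : (wordCompl A).length = A.length :=
  List.length_map _

lemma morseBlock_succ (n : ℕ) :
    morseBlock (n + 1) = morseBlock n ++ wordCompl (morseBlock n) := rfl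

lemma length_morseBlock (n : ℕ) : (morseBlock n).length = 2 ^ n := by
  induction n with
  | zero => rfl
  | succ n ih => rw [morseBlock_succ, List.length_append, length_wordCompl, ih, pow_succ, mul_two]

lemma morseBlock_prefix_of_le {i j : ℕ} (h : i ≤ j) : morseBlock i <+: morseBlock j := by
  induction j, h using Nat.le_induction with
  | base => exact List.prefix_rfl
  | succ j _ ih => exact ih.trans (List.prefix_append _ _)

lemma morse_eq_getD_morseBlock {n k : ℕ} (hk : k < 2 ^ n) :
    morse k = (morseBlock n).getD k false := by
  have hk' : k < 2 ^ (k + 1) := Nat.lt_two_pow_self.trans_le (Nat.pow_le_pow_right two_pos k.le_succ)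
  obtain ⟨t, ht⟩ := morseBlock_prefix_of_le (le_max_left (k + 1) n)
  obtain ⟨s, hs⟩ := morseBlock_prefix_of_le (le_max_right (k + 1) n)
  rw [morse, ← List.getD_append _ t _ _ (by rwa [length_morseBlock]), ht,
    ← hs, List.getD_append _ _ _ _ (by rwa [length_morseBlock])]

lemma shift_iterate_apply (u : ℕ → Bool) (k n : ℕ) : shift^[k] u n = u (n + k) := by
  induction k generalizing u with
  | zero => rfl
  | succ k ih => rw [Function.iterate_succ_apply, ih]; rfl

lemma exists_shift_morse_eq_of_suffix_morseBlock {w : List Bool} {n : ℕ}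
    (hw : w <:+ morseBlock n) : ∃ k, ∀ j < w.length, shift^[k] morse j = w.getD j false := by
  obtain ⟨t, ht⟩ := hw
  have hlen : t.length + w.length = 2 ^ n := by
    rw [← List.length_append, ht, length_morseBlock]
  refine ⟨t.length, fun j hj => ?_⟩
  rw [shift_iterate_apply, morse_eq_getD_morseBlock (n := n) (by omega), ← ht,
    List.getD_append_right _ _ _ _ (by omega), Nat.add_sub_cancel]

lemma wordCompl_morseBlock_suffix_add_two (k : ℕ) :
    wordCompl (morseBlock k) <:+ wordCompl (morseBlock (k + 2)) :=
  ⟨wordCompl (morseBlock (k + 1)) ++ morseBlock k, by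
    simp only [morseBlock_succ, wordCompl_append, wordCompl_wordCompl, List.append_assoc]⟩

lemma wordCompl_morseBlock_suffix_of_le {k l : ℕ} (hkl : k ≤ l) (hpar : k % 2 = l % 2) :
    wordCompl (morseBlock k) <:+ wordCompl (morseBlock l) := by
  obtain ⟨d, rfl⟩ : ∃ d, l = k + 2 * d := ⟨(l - k) / 2, by omega⟩
  induction d with
  | zero => exact List.suffix_rfl
  | succ d ih =>
    exact (ih (by omega) (by omega)).trans (wordCompl_morseBlock_suffix_add_two (k + 2 * d))

lemma length_flatten_map_range (B : ℕ → List Bool) (N : ℕ) :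
    ((List.range N).map B).flatten.length = ∑ i ∈ Finset.range N, (B i).length := by
  induction N with
  | zero => rfl
  | succ N ih => simp [List.range_succ, Finset.sum_range_succ, ih]

lemma concatSeq_eq_getD_flatten (B : ℕ → List Bool) {N k : ℕ}
    (hk : k < ∑ i ∈ Finset.range N, (B i).length) :
    concatSeq B k = ((List.range N).map B).flatten.getD k false := by
  induction N with
  | zero => simp at hk
  | succ N ih =>
    rw [List.range_succ, List.map_append, List.flatten_append]
    by_cases hkN : k < ∑ i ∈ Finset.range N, (B i).length
    · rw [ih hkN, List.getD_append _ _ _ _ (by rwa [length_flatten_map_range])]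
    replace hkN := not_lt.1 hkN
    have hex : ∃ n, ∑ i ∈ Finset.range n, (B i).length ≤ k ∧
        k < ∑ i ∈ Finset.range (n + 1), (B i).length := ⟨N, hkN, hk⟩
    have hmono : Monotone fun n => ∑ i ∈ Finset.range n, (B i).length :=
      fun m n h => Finset.sum_le_sum_of_subset (Finset.range_subset_range.2 h)
    have hchoose : hex.choose = N := by
      obtain ⟨hlo, hhi⟩ := hex.choose_spec
      by_contra hne
      rcases Nat.lt_or_gt_of_ne hne with hlt | hgt
      · exact absurd ((hhi.trans_le (hmono hlt)).trans_le hkN) (lt_irrefl k)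
      · exact absurd ((hk.trans_le (hmono hgt)).trans_le hlo) (lt_irrefl k)
    rw [concatSeq, dif_pos hex, hchoose,
      List.getD_append_right _ _ _ _ (by rwa [length_flatten_map_range]),
      length_flatten_map_range]
    simp

lemma mem_closure_orbit_of_forall_exists_shift_eq {u x : ℕ → Bool}
    (h : ∀ N, ∃ k, ∀ j < N, shift^[k] u j = x j) :
    x ∈ closure {y | ∃ k : ℕ, y = shift^[k] u} := by
  choose K hK using h
  refine mem_closure_of_tendsto (f := fun N => shift^[K N] u) (b := atTop) ?_
    (Eventually.of_forall fun N => ⟨K N, rfl⟩)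
  refine tendsto_pi_nhds.2 fun j => tendsto_const_nhds.congr' ?_
  filter_upwards [eventually_gt_atTop j] with N hN
  exact (hK N j hN).symm

def morseBlockConcat (a : ℕ → ℕ) (n : ℕ) : List Bool :=
  ((List.range (n + 1)).map fun i => morseBlock (a i)).flatten

lemma morseBlockConcat_succ (a : ℕ → ℕ) (n : ℕ) :
    morseBlockConcat a (n + 1) = morseBlockConcat a n ++ morseBlock (a (n + 1)) := by
  simp [morseBlockConcat, List.range_succ]

lemma lt_length_morseBlockConcat (a : ℕ → ℕ) (n : ℕ) : n < (morseBlockConcat a n).length := by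
  induction n with
  | zero => simp [morseBlockConcat, length_morseBlock]
  | succ n ih =>
    rw [morseBlockConcat_succ, List.length_append, length_morseBlock]
    have := Nat.one_le_two_pow (n := a (n + 1))
    omega

lemma morseBlockConcat_suffix_wordCompl {a : ℕ → ℕ} (hmono : StrictMono a)
    (hpar : ∀ n, a n % 2 = (n + 1) % 2) (n : ℕ) :
    morseBlockConcat a n <:+ wordCompl (morseBlock (a n + 1)) := by
  induction n with
  | zero =>
    exact ⟨wordCompl (morseBlock (a 0)), by
      simp [morseBlockConcat, morseBlock_succ, wordCompl_append, wordCompl_wordCompl]⟩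
  | succ n ih =>
    obtain ⟨t, ht⟩ := ih.trans (wordCompl_morseBlock_suffix_of_le (hmono (Nat.lt_add_one n))
      (by have := hpar n; have := hpar (n + 1); omega))
    exact ⟨t, by rw [morseBlockConcat_succ, morseBlock_succ, wordCompl_append,
      wordCompl_wordCompl, ← ht, List.append_assoc]⟩

theorem stmt2_general (a : ℕ → ℕ) (hmono : StrictMono a)
    (hpar : ∀ n, a n % 2 = (n + 1) % 2) :
    blockPt a (fun _ => false) ∈ morseMinimal := by
  refine mem_closure_orbit_of_forall_exists_shift_eq fun n => ?_
  have hsuffix : morseBlockConcat a n <:+ morseBlock (a n + 2) :=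
    (morseBlockConcat_suffix_wordCompl hmono hpar n).trans (List.suffix_append _ _)
  obtain ⟨k, hk⟩ := exists_shift_morse_eq_of_suffix_morseBlock hsuffix
  refine ⟨k, fun j hj => ?_⟩
  have hjlen : j < (morseBlockConcat a n).length := hj.trans (lt_length_morseBlockConcat a n)
  rw [hk j hjlen, blockPt]
  rw [morseBlockConcat, length_flatten_map_range] at hjlen
  simp only [Bool.false_eq_true, if_false]
  rw [concatSeq_eq_getD_flatten _ hjlen, morseBlockConcat]

theorem stmt2 (a : ℕ → ℕ) (hmono : StrictMono a) (hpos : ∀ n, 0 < a n)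
    (hpar : ∀ n, a n % 2 = (n + 1) % 2) :
    blockPt a (fun _ => false) ∈ morseMinimal :=
  stmt2_general a hmono hpar
end

section
/- Given points x^α, x^β in Σ_2 constructed from α, β ∈ {0,1}^ℕ as the concatenations x^γ = M^{γ_1}_{a_1} M^0_{a_2} M^{γ_2}_{a_3} M^0_{a_4} M^{γ_3}_{a_5} ... (where M^0_i = M_i, M^1_i = \overline{M_i}, and {a_n} is increasing with lim a_n/a_{n+1} = 0), if {j : α(j) ≠ β(j)} is infinite, then the upper distributional function satisfies Φ*_{x^α,x^β}(ε) = 1 for every ε > 0. -/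
open Filter

lemma summable_dist2_term (u v : ℕ → Bool) :
    Summable fun i => if u i = v i then (0 : ℝ) else (1 / 2) ^ (i + 1) :=
  (summable_geometric_two.mul_left (1 / 2)).of_nonneg_of_le
    (fun i => by split_ifs <;> positivity) (fun i => by split_ifs <;> simp [pow_succ'])

lemma dist2_le_of_forall_lt_eq (u v : ℕ → Bool) (N : ℕ) (h : ∀ i < N, u i = v i) :
    dist2 u v ≤ (1 / 2) ^ N := by
  rw [dist2, ← (summable_dist2_term u v).sum_add_tsum_nat_add N,
    Finset.sum_eq_zero fun i hi => if_pos (h i (Finset.mem_range.1 hi)), zero_add]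
  calc ∑' i, (if u (i + N) = v (i + N) then (0 : ℝ) else (1 / 2) ^ (i + N + 1))
      ≤ ∑' i, (1 / 2) ^ (N + 1) * (1 / 2 : ℝ) ^ i :=
        Summable.tsum_le_tsum
          (fun i => by
            split_ifs
            · positivity
            · exact (by ring : (1 / 2 : ℝ) ^ (i + N + 1) = _).le)
          ((summable_nat_add_iff N).2 (summable_dist2_term u v))
          (summable_geometric_two.mul_left _)
    _ = (1 / 2) ^ N := by rw [tsum_mul_left, tsum_geometric_two]; ring

lemma dist2_shift_le_of_eqOn {x y : ℕ → Bool} {s L : ℕ} (hxy : Set.EqOn x y (Set.Ico s (s + L)))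
    {k N : ℕ} (hsk : s ≤ k) (hkN : k + N ≤ s + L) :
    dist2 (shift^[k] x) (shift^[k] y) ≤ (1 / 2) ^ N :=
  dist2_le_of_forall_lt_eq _ _ N fun i hi => by
    simp only [shift_iterate_apply]
    exact hxy ⟨by omega, by omega⟩

open Classical in
lemma card_close_ge_of_eqOn {x y : ℕ → Bool} {s L : ℕ} (hxy : Set.EqOn x y (Set.Ico s (s + L)))
    {N : ℕ} {ε : ℝ} (hN : (1 / 2 : ℝ) ^ N < ε) :
    L - (N + 1) ≤
      ((Finset.Ioo 0 (s + L)).filter fun k => dist2 (shift^[k] x) (shift^[k] y) < ε).card :=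
  calc L - (N + 1) = (Finset.Ioo s (s + L - N)).card := by rw [Nat.card_Ioo]; omega
    _ ≤ _ := Finset.card_le_card fun k hk => by
      rw [Finset.mem_Ioo] at hk
      rw [Finset.mem_filter, Finset.mem_Ioo]
      exact ⟨⟨by omega, by omega⟩, (dist2_shift_le_of_eqOn hxy hk.1.le (by omega)).trans_lt hN⟩

theorem phiStar_eq_one_of_eqOn_long_windows {ι : Type*} {l : Filter ι} [l.NeBot]
    {x y : ℕ → Bool} {s L : ι → ℕ} (hxy : ∀ i, Set.EqOn x y (Set.Ico (s i) (s i + L i)))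
    (hL : Tendsto L l atTop) (hsL : Tendsto (fun i => (s i : ℝ) / L i) l (nhds 0))
    {ε : ℝ} (hε : 0 < ε) : PhiStar x y ε = 1 := by
  classical
  obtain ⟨N, hN⟩ := exists_pow_lt_of_lt_one hε (by norm_num : (1 / 2 : ℝ) < 1)
  rw [PhiStar]
  set u : ℕ → ℝ := fun m =>
    (((Finset.Ioo 0 m).filter fun k => dist2 (shift^[k] x) (shift^[k] y) < ε).card : ℝ) / m
  have hu_nonneg : ∀ m, 0 ≤ u m := fun m => by positivity
  have hu_le : ∀ m, u m ≤ 1 := fun m => by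
    refine div_le_one_of_le₀ ?_ m.cast_nonneg
    exact_mod_cast (Finset.card_filter_le _ _).trans (by simp)
  have hlower : ∀ i, 0 < L i → 1 - ((s i : ℝ) + N + 1) / L i ≤ u (s i + L i) := by
    intro i hLi
    have hcard := Nat.sub_le_iff_le_add.1 (card_close_ge_of_eqOn (hxy i) hN)
    set C := ((Finset.Ioo 0 (s i + L i)).filter
      fun k => dist2 (shift^[k] x) (shift^[k] y) < ε).card
    have hcard' : (L i : ℝ) ≤ C + N + 1 := by exact_mod_cast hcard
    have hLi' : (0 : ℝ) < L i := by exact_mod_cast hLi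
    set q := ((s i : ℝ) + N + 1) / L i
    have hq : q * L i = s i + N + 1 := div_mul_cancel₀ _ hLi'.ne'
    have hq0 : 0 ≤ q * s i := by positivity
    rw [le_div_iff₀ (by push_cast; positivity)]
    push_cast
    nlinarith
  have herr : Tendsto (fun i => ((s i : ℝ) + N + 1) / L i) l (nhds 0) := by
    simpa [add_div, add_assoc] using
      hsL.add ((tendsto_const_div_atTop_nhds_zero_nat ((N : ℝ) + 1)).comp hL)
  have hwindow : Tendsto (fun i => s i + L i) l atTop :=
    tendsto_atTop_mono (fun i => Nat.le_add_left _ _) hL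
  refine le_antisymm
    (limsup_le_of_le (isCoboundedUnder_le_of_le atTop hu_nonneg) (Eventually.of_forall hu_le)) ?_
  refine le_of_forall_lt_imp_le_of_dense fun c hc =>
    le_limsup_of_frequently_le ?_ (isBoundedUnder_of ⟨1, hu_le⟩)
  have hone : Tendsto (fun i => 1 - ((s i : ℝ) + N + 1) / L i) l (nhds 1) := by
    simpa using tendsto_const_nhds.sub herr
  refine hwindow.frequently (Eventually.frequently ?_)
  filter_upwards [hone.eventually (lt_mem_nhds hc), hL.eventually_gt_atTop 0] with i hi hLi
  exact hi.le.trans (hlower i hLi)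

lemma concatSeq_apply_of_mem (B : ℕ → List Bool) {n k : ℕ}
    (h₁ : ∑ i ∈ Finset.range n, (B i).length ≤ k)
    (h₂ : k < ∑ i ∈ Finset.range (n + 1), (B i).length) :
    concatSeq B k = (B n).getD (k - ∑ i ∈ Finset.range n, (B i).length) false := by
  have hex : ∃ m, ∑ i ∈ Finset.range m, (B i).length ≤ k ∧
      k < ∑ i ∈ Finset.range (m + 1), (B i).length := ⟨n, h₁, h₂⟩
  have hmono : Monotone fun m => ∑ i ∈ Finset.range m, (B i).length :=
    fun _ _ h => Finset.sum_le_sum_of_subset (Finset.range_subset_range.2 h)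
  obtain ⟨hc₁, hc₂⟩ := hex.choose_spec
  have hchoose : hex.choose = n := by
    have := hmono.reflect_lt (hc₁.trans_lt h₂)
    have := hmono.reflect_lt (h₁.trans_lt hc₂)
    omega
  rw [concatSeq, dif_pos hex, hchoose]

lemma wordCompl_length (B : List Bool) : (wordCompl B).length = B.length :=
  List.length_map _

lemma morseBlock_length (i : ℕ) : (morseBlock i).length = 2 ^ i := by
  induction i with
  | zero => rfl
  | succ i ih => rw [morseBlock, List.length_append, wordCompl_length, ih, pow_succ, mul_two]

def blockStart (a : ℕ → ℕ) (n : ℕ) : ℕ := ∑ i ∈ Finset.range n, 2 ^ a i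

lemma blockPt_apply (a : ℕ → ℕ) (e : ℕ → Bool) {n k : ℕ} (h₁ : blockStart a n ≤ k)
    (h₂ : k < blockStart a n + 2 ^ a n) :
    blockPt a e k = (if e n then wordCompl (morseBlock (a n)) else morseBlock (a n)).getD
      (k - blockStart a n) false := by
  have hlen : ∀ m, ∑ i ∈ Finset.range m,
      (if e i then wordCompl (morseBlock (a i)) else morseBlock (a i)).length = blockStart a m :=
    fun m => Finset.sum_congr rfl fun i _ => by
      split_ifs <;> simp only [wordCompl_length, morseBlock_length]
  rw [blockPt, concatSeq_apply_of_mem _ (by rwa [hlen])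
    (by rwa [hlen, blockStart, Finset.sum_range_succ]), hlen]

lemma xpt_eqOn_odd_block (a : ℕ → ℕ) (α β : ℕ → Bool) {n : ℕ} (hn : n % 2 = 1) :
    Set.EqOn (xpt a α) (xpt a β) (Set.Ico (blockStart a n) (blockStart a n + 2 ^ a n)) :=
  fun _ hk => by simp only [xpt, blockPt_apply _ _ hk.1 hk.2, hn]; rfl

lemma blockStart_succ_le {a : ℕ → ℕ} (ha : Monotone a) (n : ℕ) :
    blockStart a (n + 1) ≤ (n + 1) * 2 ^ a n :=
  calc blockStart a (n + 1) ≤ ∑ _i ∈ Finset.range (n + 1), 2 ^ a n :=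
        Finset.sum_le_sum fun _ hi =>
          Nat.pow_le_pow_right two_pos (ha (Finset.mem_range_succ_iff.1 hi))
    _ = (n + 1) * 2 ^ a n := by simp

lemma eventually_two_mul_le_of_tendsto_div {a : ℕ → ℕ} (hmono : StrictMono a)
    (hratio : Tendsto (fun n => (a n : ℝ) / (a (n + 1) : ℝ)) atTop (nhds 0)) :
    ∀ᶠ n in atTop, 2 * a n ≤ a (n + 1) := by
  filter_upwards [hratio.eventually_lt_const (by norm_num : (0 : ℝ) < 1 / 2)] with n hn
  have hpos : (0 : ℝ) < a (n + 1) := by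
    exact_mod_cast (Nat.zero_le _).trans_lt (hmono n.lt_succ_self)
  rw [div_lt_iff₀ hpos] at hn
  exact_mod_cast (by linarith : (2 * a n : ℝ) ≤ a (n + 1))

lemma tendsto_succ_div_two_pow :
    Tendsto (fun n : ℕ => ((n : ℝ) + 1) / 2 ^ n) atTop (nhds 0) := by
  have h := ((tendsto_add_atTop_iff_nat 1).2
    (tendsto_pow_const_div_const_pow_of_one_lt 1 one_lt_two)).const_mul 2
  rw [mul_zero] at h
  refine h.congr fun n => ?_
  push_cast
  rw [pow_one, pow_succ]
  field_simp

lemma tendsto_blockStart_div_two_pow {a : ℕ → ℕ} (hmono : StrictMono a)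
    (hratio : Tendsto (fun n => (a n : ℝ) / (a (n + 1) : ℝ)) atTop (nhds 0)) :
    Tendsto (fun n => (blockStart a n : ℝ) / 2 ^ a n) atTop (nhds 0) := by
  rw [← tendsto_add_atTop_iff_nat 1]
  refine squeeze_zero' (Eventually.of_forall fun n => by positivity) ?_ tendsto_succ_div_two_pow
  filter_upwards [eventually_two_mul_le_of_tendsto_div hmono hratio] with n hn
  have hstart : (blockStart a (n + 1) : ℝ) ≤ (n + 1) * 2 ^ a n := by
    exact_mod_cast blockStart_succ_le hmono.monotone n
  have hden : (2 : ℝ) ^ n * 2 ^ a n ≤ 2 ^ a (n + 1) := by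
    rw [← pow_add]
    exact pow_le_pow_right₀ one_le_two (by have := hmono.le_apply (x := n); omega)
  calc (blockStart a (n + 1) : ℝ) / 2 ^ a (n + 1)
      ≤ ((n + 1) * 2 ^ a n) / (2 ^ n * 2 ^ a n) :=
        div_le_div₀ (by positivity) hstart (by positivity) hden
    _ = (n + 1) / 2 ^ n := mul_div_mul_right _ _ (by positivity)

theorem stmt10_general (a : ℕ → ℕ) (α β : ℕ → Bool) (hmono : StrictMono a)
    (hratio : Tendsto (fun n => (a n : ℝ) / (a (n + 1) : ℝ)) atTop (nhds 0)) :
    ∀ ε > 0, PhiStar (xpt a α) (xpt a β) ε = 1 := by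
  have hodd : Tendsto (fun n : ℕ => 2 * n + 1) atTop atTop :=
    tendsto_atTop_mono (fun n => show n ≤ 2 * n + 1 by omega) tendsto_id
  intro ε hε
  refine phiStar_eq_one_of_eqOn_long_windows (l := atTop)
    (fun n => xpt_eqOn_odd_block a α β (n := 2 * n + 1) (by omega)) ?_ ?_ hε
  · exact (tendsto_pow_atTop_atTop_of_one_lt one_lt_two).comp
      (hmono.tendsto_atTop.comp hodd)
  · simpa only [Function.comp_def, Nat.cast_pow, Nat.cast_ofNat] using
      (tendsto_blockStart_div_two_pow hmono hratio).comp hodd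

theorem stmt10 (a : ℕ → ℕ) (α β : ℕ → Bool) (hmono : StrictMono a) (hpos : ∀ n, 0 < a n)
    (hratio : Tendsto (fun n => (a n : ℝ) / (a (n + 1) : ℝ)) atTop (nhds 0))
    (hdiff : {j : ℕ | α j ≠ β j}.Infinite) :
    ∀ ε > 0, PhiStar (xpt a α) (xpt a β) ε = 1 :=
  stmt10_general a α β hmono hratio
end
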